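/- arXiv:1305.5805 — 2 statements merged into one kernel-verified Lean document; each statement's English description precedes it below -/
import Mathlib

section
/- Let G be a finite simple graph, H the induced subgraph on a vertex set Y, and x, y ∈ Y two distinct vertices with x ∼⊥ y in G. Let H' be the induced subgraph on Y \ {y}. Then two vertices z₁, z₂ ∈ Y \ {y} lie in the same connected component of H' if and only if they lie in the same connected component of H. -/
def closedNbhd {V : Type*} (G : SimpleGraph V) (x : V) : Set V :=
  {z | z = x ∨ G.Adj x z}

/-! Sending `y` to its twin `x` retracts `G(Y)` onto `G(Y \ {y})`: an edge at `y` becomes an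
edge at `x` or collapses to the vertex `x`, so every walk in `G(Y)` maps to a walk in
`G(Y \ {y})` that keeps its endpoints when they differ from `y`. -/

namespace SimpleGraph

variable {V : Type*} {G : SimpleGraph V}

theorem Reachable.map_of_adj {W : Type*} {H : SimpleGraph W} (f : V → W)
    (hf : ∀ ⦃a b⦄, G.Adj a b → H.Reachable (f a) (f b)) {a b : V} (h : G.Reachable a b) :
    H.Reachable (f a) (f b) := by
  rw [reachable_iff_reflTransGen] at h ⊢
  exact h.lift' f fun _ _ hab => (reachable_iff_reflTransGen _ _).1 (hf hab)

theorem induce_reachable_of_mem_closedNbhd {s : Set V} {u v : s}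
    (h : (v : V) ∈ closedNbhd G u) : (G.induce s).Reachable u v := by
  rcases h with h | h
  · rw [Subtype.ext h]
  · exact Adj.reachable h

theorem update_mem_closedNbhd_of_adj [DecidableEq V] {x y : V}
    (hxy : closedNbhd G y ⊆ closedNbhd G x) {a b : V} (hab : G.Adj a b) :
    Function.update id y x b ∈ closedNbhd G (Function.update id y x a) := by
  by_cases ha : a = y <;> by_cases hb : b = y
  · exact absurd (ha.trans hb.symm ▸ hab) G.irrefl
  · rw [ha, Function.update_self, Function.update_of_ne hb]
    exact hxy (Or.inr (ha ▸ hab))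
  · rw [hb, Function.update_self, Function.update_of_ne ha]
    rcases hxy (Or.inr (hb ▸ hab.symm)) with h | h
    · exact Or.inl h.symm
    · exact Or.inr h.symm
  · rw [Function.update_of_ne ha, Function.update_of_ne hb]
    exact Or.inr hab

end SimpleGraph

theorem remove_perp_twin_preserves_components_general {V : Type*}
    (G : SimpleGraph V) (Y : Set V) (x y : V) (hx : x ∈ Y)
    (hxy : x ≠ y) (hperp : closedNbhd G x = closedNbhd G y)
    (z₁ z₂ : V) (hz₁ : z₁ ∈ Y \ {y}) (hz₂ : z₂ ∈ Y \ {y}) :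
    (G.induce (Y \ {y})).Reachable ⟨z₁, hz₁⟩ ⟨z₂, hz₂⟩ ↔
      (G.induce Y).Reachable ⟨z₁, hz₁.1⟩ ⟨z₂, hz₂.1⟩ := by
  classical
  refine ⟨fun h => h.map (G.induceHomOfLE Set.sdiff_subset).toHom, fun h => ?_⟩
  have hmaps : Set.MapsTo (Function.update id y x) Y (Y \ {y}) := fun a ha => by
    by_cases hay : a = y
    · simpa [hay] using ⟨hx, hxy⟩
    · simpa [Function.update_of_ne hay] using ⟨ha, hay⟩
  have hfix : ∀ z (hz : z ∈ Y \ {y}), hmaps.restrict _ _ _ ⟨z, hz.1⟩ = ⟨z, hz⟩ := fun z hz =>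
    Subtype.ext (Function.update_of_ne hz.2 _ _)
  have := h.map_of_adj (hmaps.restrict _ _ _) fun a b hab =>
    SimpleGraph.induce_reachable_of_mem_closedNbhd
      (SimpleGraph.update_mem_closedNbhd_of_adj hperp.ge hab)
  rwa [hfix, hfix] at this

theorem remove_perp_twin_preserves_components {V : Type*} [Fintype V]
    (G : SimpleGraph V) (Y : Set V) (x y : V) (hx : x ∈ Y) (hy : y ∈ Y)
    (hxy : x ≠ y) (hperp : closedNbhd G x = closedNbhd G y)
    (z₁ z₂ : V) (hz₁ : z₁ ∈ Y \ {y}) (hz₂ : z₂ ∈ Y \ {y}) :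
    (G.induce (Y \ {y})).Reachable ⟨z₁, hz₁⟩ ⟨z₂, hz₂⟩ ↔
      (G.induce Y).Reachable ⟨z₁, hz₁.1⟩ ⟨z₂, hz₂.1⟩ :=
  remove_perp_twin_preserves_components_general G Y x y hx hxy hperp z₁ z₂ hz₁ hz₂
end

section
/- If z₁ and z₂ are connected by a path in a finite simple graph H that passes through a vertex y, and x ≠ y is a vertex such that every neighbor of y in H is also a neighbor of x, and z₁, z₂ ≠ y, then z₁ and z₂ are connected by a path in H avoiding y. -/
/-!
Since `x` dominates `y`, a walk that leaves `y` can be made to leave from `x` instead. Split the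
walk at `y`, shorten each half to a path starting at `y` so that `y` occurs only at its start,
and reroute the first edge of each half through `x`; gluing the two halves at `x` avoids `y`.
-/

namespace SimpleGraph

variable {V : Type*} {G : SimpleGraph V} {x y : V}

lemma exists_walk_avoiding_of_walk_from {z : V} (hxy : x ≠ y) (hz : z ≠ y)
    (hnbr : ∀ w, w ≠ x → G.Adj y w → G.Adj x w) (p : G.Walk y z) :
    ∃ q : G.Walk x z, y ∉ q.support := by
  classical
  obtain ⟨q, hq⟩ : ∃ q : G.Walk y z, q.IsPath := ⟨p.bypass, p.bypass_isPath⟩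
  cases q with
  | nil => exact absurd rfl hz
  | @cons _ w _ hyw q =>
    have hy : y ∉ q.support := ((Walk.cons_isPath_iff hyw q).mp hq).2
    by_cases hwx : w = x
    · subst hwx
      exact ⟨q, hy⟩
    · refine ⟨Walk.cons (hnbr w hwx hyw) q, ?_⟩
      rw [Walk.support_cons, List.mem_cons, not_or]
      exact ⟨hxy.symm, hy⟩

end SimpleGraph

theorem walk_avoiding_vertex_general {V : Type*} (H : SimpleGraph V)
    (x y z₁ z₂ : V) (hxy : x ≠ y) (hz₁ : z₁ ≠ y) (hz₂ : z₂ ≠ y)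
    (hnbr : ∀ w : V, w ≠ x → H.Adj y w → H.Adj x w)
    (p : H.Walk z₁ z₂) (hp : y ∈ p.support) :
    ∃ q : H.Walk z₁ z₂, y ∉ q.support := by
  classical
  obtain ⟨r₁, hr₁⟩ :=
    SimpleGraph.exists_walk_avoiding_of_walk_from hxy hz₁ hnbr (p.takeUntil y hp).reverse
  obtain ⟨r₂, hr₂⟩ := SimpleGraph.exists_walk_avoiding_of_walk_from hxy hz₂ hnbr (p.dropUntil y hp)
  refine ⟨r₁.reverse.append r₂, ?_⟩
  rw [SimpleGraph.Walk.mem_support_append_iff, SimpleGraph.Walk.support_reverse, List.mem_reverse]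
  exact not_or_intro hr₁ hr₂

theorem walk_avoiding_vertex {V : Type*} [Fintype V] (H : SimpleGraph V)
    (x y z₁ z₂ : V) (hxy : x ≠ y) (hz₁ : z₁ ≠ y) (hz₂ : z₂ ≠ y)
    (hnbr : ∀ w : V, w ≠ x → H.Adj y w → H.Adj x w)
    (p : H.Walk z₁ z₂) (hp : y ∈ p.support) :
    ∃ q : H.Walk z₁ z₂, y ∉ q.support :=
  walk_avoiding_vertex_general H x y z₁ z₂ hxy hz₁ hz₂ hnbr p hp
end
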